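/- Let H be a real Hilbert space, E a nonempty closed convex subset of H, and f : E × E → ℝ a bifunction satisfying conditions (A1)–(A4). Let S : H → H be an (α, β)-generalized hybrid mapping with F(S) ∩ EP(f) ≠ ∅. Let {r_n} ⊂ (0,∞) satisfy liminf_{n→∞} r_n > 0 and let {β_n} be a sequence in [b,1] for some b ∈ (0,1) with liminf_{n→∞} β_n(1−β_n) > 0. Let x_1 = x ∈ H and let {x_n} ⊂ H and {u_n} ⊂ E satisfy, for all n ∈ ℕ: f(u_n, y) + (1/r_n)⟨y − u_n, u_n − x_n⟩ ≥ 0 for all y ∈ E, and x_{n+1} = S((1−β_n)x_n + β_n S u_n). Then {x_n} converges weakly to a point v ∈ F(S) ∩ EP(f), and v = lim_{n→∞} P_{F(S)∩EP(f)}(x_n). -/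

import Mathlib

/-!
By (A2) the resolvent step `x ↦ u` moves `x` closer to every point of
`K = F(S) ∩ EP(f)` (`‖u - z‖² + ‖x - u‖² ≤ ‖x - z‖²`), and a generalized hybrid map is
quasi-nonexpansive, so `(x n)` is Fejér monotone with respect to `K` and the telescoping
estimate gives `‖x n - u n‖ → 0`, `‖S (u n) - u n‖ → 0`. Hence every weak cluster point of
`(x n)` lies in `K`: in `F(S)` by demiclosedness of `I - S`, in `EP(f)` by weak lower
semicontinuity of `f y` and Minty's lemma. Opial's argument turns this into weak convergence of
the whole sequence, and Fejér monotonicity makes the projections `P_K (x n)` a Cauchy sequence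
whose limit is the weak limit.
-/

open Filter Function RealInnerProductSpace
open scoped Topology

theorem limsup_nonneg_of_eventually_nonneg {α : Type*} {l : Filter α} [l.NeBot] {g : α → ℝ}
    (h : ∀ᶠ t in l, 0 ≤ g t) : 0 ≤ limsup g l := by
  by_cases hb : IsBoundedUnder (· ≤ ·) l g
  · exact le_limsup_of_frequently_le h.frequently hb
  · -- junk value: an unbounded `limsup` in `ℝ` is `sInf ∅ = 0`
    have : {a | ∀ᶠ t in l, g t ≤ a} = ∅ := Set.eq_empty_of_forall_notMem fun a ha => hb ⟨a, ha⟩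
    rw [limsup_eq, this, Real.sInf_empty]

theorem tendsto_zero_of_sq_le_sub_succ {d a : ℕ → ℝ} {L κ : ℝ} (hd : Tendsto d atTop (𝓝 L))
    (hκ : 0 < κ) (ha : ∀ n, 0 ≤ a n) (h : ∀ᶠ n in atTop, κ * a n ^ 2 ≤ d n - d (n + 1)) :
    Tendsto a atTop (𝓝 0) := by
  have hdiff : Tendsto (fun n => (d n - d (n + 1)) / κ) atTop (𝓝 0) := by
    simpa using (hd.sub (hd.comp (tendsto_add_atTop_nat 1))).div_const κ
  have hsq : Tendsto (fun n => a n ^ 2) atTop (𝓝 0) :=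
    squeeze_zero' (Eventually.of_forall fun n => sq_nonneg _)
      (h.mono fun n hn => (le_div_iff₀' hκ).mpr hn) hdiff
  simpa [Real.sqrt_sq (ha _)] using hsq.sqrt

theorem cauchySeq_of_dist_sq_le {X : Type*} [PseudoMetricSpace X] {p : ℕ → X} {a : ℕ → ℝ} {L : ℝ}
    (ha : Tendsto a atTop (𝓝 L)) (h : ∀ n m, n ≤ m → dist (p m) (p n) ^ 2 ≤ a n - a m) :
    CauchySeq p := by
  refine Metric.cauchySeq_iff'.mpr fun ε hε => ?_
  obtain ⟨N, hN⟩ := Metric.cauchySeq_iff'.mp ha.cauchySeq (ε ^ 2) (by positivity)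
  refine ⟨N, fun n hn => lt_of_pow_lt_pow_left₀ 2 hε.le ?_⟩
  have := hN n hn
  rw [Real.dist_eq, abs_sub_comm] at this
  linarith [h N n hn, le_abs_self (a N - a n)]

section Hilbert

variable {H : Type*} [NormedAddCommGroup H] [InnerProductSpace ℝ H]

theorem norm_smul_add_smul_sq {a b : ℝ} (hab : a + b = 1) (x y : H) :
    ‖a • x + b • y‖ ^ 2 = a * ‖x‖ ^ 2 + b * ‖y‖ ^ 2 - a * b * ‖x - y‖ ^ 2 := by
  obtain rfl : a = 1 - b := by linarith
  simp only [← real_inner_self_eq_norm_sq, inner_add_left, inner_add_right, inner_sub_left,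
    inner_sub_right, real_inner_smul_left, real_inner_smul_right, real_inner_comm x y]
  ring

theorem tendsto_inner_zero_of_norm_le {a b : ℕ → H} {M : ℝ} (ha : ∀ n, ‖a n‖ ≤ M)
    (hb : Tendsto (fun n => ‖b n‖) atTop (𝓝 0)) :
    Tendsto (fun n => ⟪a n, b n⟫) atTop (𝓝 0) := by
  refine squeeze_zero_norm (fun n => (norm_inner_le_norm (a n) (b n)).trans ?_)
    (by simpa using hb.const_mul M)
  exact mul_le_mul_of_nonneg_right (ha n) (norm_nonneg _)

theorem tendsto_norm_sq_sub_norm_sq {a b : ℕ → H} {M : ℝ} (ha : ∀ n, ‖a n‖ ≤ M)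
    (hab : Tendsto (fun n => ‖b n - a n‖) atTop (𝓝 0)) :
    Tendsto (fun n => ‖b n‖ ^ 2 - ‖a n‖ ^ 2) atTop (𝓝 0) := by
  have key : ∀ n, ‖b n‖ ^ 2 - ‖a n‖ ^ 2 = 2 * ⟪a n, b n - a n⟫ + ‖b n - a n‖ ^ 2 := by
    intro n
    have := norm_add_sq_real (a n) (b n - a n)
    rw [add_sub_cancel] at this
    linarith
  simp only [key]
  simpa using ((tendsto_inner_zero_of_norm_le ha hab).const_mul 2).add (hab.pow 2)

theorem exists_nearest_point [CompleteSpace H] {K : Set H} (hne : K.Nonempty) (hcl : IsClosed K)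
    (hco : Convex ℝ K) (y : H) :
    ∃ p ∈ K, (∀ w ∈ K, ‖y - p‖ ≤ ‖y - w‖) ∧ ∀ w ∈ K, ⟪y - p, w - p⟫ ≤ 0 := by
  obtain ⟨p, hp, hmin⟩ := exists_norm_eq_iInf_of_complete_convex hne hcl.isComplete hco y
  refine ⟨p, hp, fun w hw => ?_, (norm_eq_iInf_iff_real_inner_le_zero hco hp).mp hmin⟩
  rw [hmin]
  exact ciInf_le ⟨0, by rintro _ ⟨w', rfl⟩; exact norm_nonneg _⟩ (⟨w, hw⟩ : K)

end Hilbert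

section WeakConvergence

variable {H : Type*} [NormedAddCommGroup H] [InnerProductSpace ℝ H]

def WeakTendsto (x : ℕ → H) (v : H) : Prop :=
  ∀ w : H, Tendsto (fun n => ⟪x n, w⟫) atTop (𝓝 ⟪v, w⟫)

namespace WeakTendsto

variable {x y : ℕ → H} {v : H}

theorem congr_of_norm_sub (hx : WeakTendsto x v)
    (hxy : Tendsto (fun n => ‖x n - y n‖) atTop (𝓝 0)) : WeakTendsto y v := by
  intro w
  have h : Tendsto (fun n => ⟪w, x n - y n⟫) atTop (𝓝 0) :=
    tendsto_inner_zero_of_norm_le (fun _ => le_rfl) hxy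
  simpa [real_inner_comm w, inner_sub_right] using (hx w).sub h

theorem tendsto_inner_of_tendsto (hx : WeakTendsto x v) {M : ℝ} (hM : ∀ n, ‖x n‖ ≤ M) {y₀ : H}
    (hy : Tendsto y atTop (𝓝 y₀)) : Tendsto (fun n => ⟪x n, y n⟫) atTop (𝓝 ⟪v, y₀⟫) := by
  have h : Tendsto (fun n => ⟪x n, y n - y₀⟫) atTop (𝓝 0) :=
    tendsto_inner_zero_of_norm_le hM (tendsto_iff_norm_sub_tendsto_zero.mp hy)
  simpa [inner_sub_right] using (hx y₀).add h

theorem tendsto_apply [CompleteSpace H] (hx : WeakTendsto x v) (ℓ : StrongDual ℝ H) :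
    Tendsto (fun n => ℓ (x n)) atTop (𝓝 (ℓ v)) := by
  simpa only [real_inner_comm ((InnerProductSpace.toDual ℝ H).symm ℓ),
    InnerProductSpace.toDual_symm_apply] using hx ((InnerProductSpace.toDual ℝ H).symm ℓ)

end WeakTendsto

theorem IsClosed.mem_of_forall_strongDual_tendsto {F : Type*} [NormedAddCommGroup F]
    [NormedSpace ℝ F] {C : Set F} (hC : IsClosed C) (hCc : Convex ℝ C) {y : ℕ → F} {y₀ : F}
    (hy : ∀ n, y n ∈ C) (h : ∀ ℓ : StrongDual ℝ F, Tendsto (fun n => ℓ (y n)) atTop (𝓝 (ℓ y₀))) :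
    y₀ ∈ C := by
  by_contra hy₀
  obtain ⟨ℓ, s, hℓC, hℓy₀⟩ := geometric_hahn_banach_closed_point hCc hC hy₀
  exact hℓy₀.not_ge (le_of_tendsto (h ℓ) (Eventually.of_forall fun n => (hℓC _ (hy n)).le))

variable [CompleteSpace H]

theorem Convex.mem_of_weakTendsto {E : Set H} (hEco : Convex ℝ E) (hEcl : IsClosed E)
    {u : ℕ → H} {v : H} (hu : WeakTendsto u v) (huE : ∀ n, u n ∈ E) : v ∈ E :=
  hEcl.mem_of_forall_strongDual_tendsto hEco huE hu.tendsto_apply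

theorem ConvexOn.le_of_weakTendsto {E : Set H} {g : H → ℝ} (hg : ConvexOn ℝ E g)
    (hgl : LowerSemicontinuousOn g E) (hEcl : IsClosed E) {u : ℕ → H} {v : H}
    (hu : WeakTendsto u v) (huE : ∀ n, u n ∈ E) {t : ℕ → ℝ} {c : ℝ}
    (ht : Tendsto t atTop (𝓝 c)) (hgt : ∀ n, g (u n) ≤ t n) : g v ≤ c := by
  have hepi := (lowerSemicontinuousOn_iff_isClosed_epigraph hEcl).mp hgl
  refine (hepi.mem_of_forall_strongDual_tendsto hg.convex_epigraph (y := fun n => (u n, t n))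
    (y₀ := (v, c)) (fun n => ⟨huE n, hgt n⟩) fun ℓ => ?_).2
  simp only [← ℓ.comp_inl_add_comp_inr]
  exact (hu.tendsto_apply _).add (((ℓ.comp (.inr ℝ H ℝ)).continuous.tendsto c).comp ht)

/-- Sequential Banach–Alaoglu, applied in the separable closed span of the sequence. -/
theorem exists_weakTendsto_subseq {x : ℕ → H} {M : ℝ} (hx : ∀ n, ‖x n‖ ≤ M) :
    ∃ φ : ℕ → ℕ, StrictMono φ ∧ ∃ v, WeakTendsto (x ∘ φ) v := by
  set V := (Submodule.span ℝ (Set.range x)).topologicalClosure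
  have hxV : ∀ n, x n ∈ V :=
    fun n => Submodule.le_topologicalClosure _ (Submodule.subset_span ⟨n, rfl⟩)
  have : TopologicalSpace.SeparableSpace V := by
    refine TopologicalSpace.IsSeparable.separableSpace ?_
    rw [Submodule.topologicalClosure_coe]
    exact (Set.countable_range x).isSeparable.span.closure
  let ℓ : ℕ → WeakDual ℝ V :=
    fun n => StrongDual.toWeakDual (InnerProductSpace.toDual ℝ V ⟨x n, hxV n⟩)
  obtain ⟨ℓ₀, -, φ, hφ, hlim⟩ := WeakDual.isSeqCompact_closedBall ℝ V 0 M
    (x := ℓ) fun n => by simpa [ℓ] using hx n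
  refine ⟨φ, hφ, (InnerProductSpace.toDual ℝ V).symm (WeakDual.toStrongDual ℓ₀), fun w => ?_⟩
  have := ((WeakDual.eval_continuous (V.orthogonalProjectionOnto w)).tendsto ℓ₀).comp hlim
  simp only [comp_def, StrongDual.toWeakDual_apply, InnerProductSpace.toDual_apply_apply,
    Submodule.inner_orthogonalProjectionOnto_eq_of_mem_left, ℓ] at this
  rwa [← Submodule.inner_orthogonalProjectionOnto_eq_of_mem_left,
    InnerProductSpace.toDual_symm_apply]

end WeakConvergence

section Equilibrium

variable {V : Type*} {E : Set V} {f : V → V → ℝ}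

variable (E f) in
def equilibriumSet : Set V := {z ∈ E | ∀ w ∈ E, 0 ≤ f z w}

theorem le_zero_of_mem_equilibriumSet (hA2 : ∀ x ∈ E, ∀ y ∈ E, f x y + f y x ≤ 0) {y z : V}
    (hz : z ∈ equilibriumSet E f) (hy : y ∈ E) : f y z ≤ 0 := by
  linarith [hA2 z hz.1 y hy, hz.2 y hy]

variable [AddCommGroup V] [Module ℝ V]

/-- Minty's lemma. -/
theorem mem_equilibriumSet_of_forall_le_zero (hEco : Convex ℝ E)
    (hA1 : ∀ x ∈ E, f x x = 0)
    (hA3 : ∀ x ∈ E, ∀ y ∈ E, ∀ z ∈ E,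
      limsup (fun t : ℝ => f (t • z + (1 - t) • x) y) (𝓝[>] 0) ≤ f x y)
    (hA4c : ∀ x ∈ E, ConvexOn ℝ E (f x)) {z : V} (hz : z ∈ E) (h : ∀ y ∈ E, f y z ≤ 0) :
    z ∈ equilibriumSet E f := by
  refine ⟨hz, fun w hw => (limsup_nonneg_of_eventually_nonneg ?_).trans (hA3 z hz w hw w hw)⟩
  filter_upwards [Ioc_mem_nhdsGT one_pos] with t ⟨ht0, ht1⟩
  have hy : t • w + (1 - t) • z ∈ E := hEco hw hz ht0.le (sub_nonneg.2 ht1) (by ring)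
  -- `0 = f y y ≤ t f(y, w) + (1 - t) f(y, z)` for `y = t w + (1 - t) z`
  have hconv := (hA4c _ hy).2 hw hz ht0.le (sub_nonneg.2 ht1) (add_sub_cancel t 1)
  rw [hA1 _ hy, smul_eq_mul, smul_eq_mul] at hconv
  have := mul_nonpos_of_nonneg_of_nonpos (sub_nonneg.2 ht1) (h _ hy)
  exact nonneg_of_mul_nonneg_right (by linarith) ht0

theorem equilibriumSet_eq_biInter (hEco : Convex ℝ E)
    (hA1 : ∀ x ∈ E, f x x = 0) (hA2 : ∀ x ∈ E, ∀ y ∈ E, f x y + f y x ≤ 0)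
    (hA3 : ∀ x ∈ E, ∀ y ∈ E, ∀ z ∈ E,
      limsup (fun t : ℝ => f (t • z + (1 - t) • x) y) (𝓝[>] 0) ≤ f x y)
    (hA4c : ∀ x ∈ E, ConvexOn ℝ E (f x)) :
    equilibriumSet E f = E ∩ ⋂ y ∈ E, {z | z ∈ E ∧ f y z ≤ 0} := by
  ext z
  simp only [Set.mem_inter_iff, Set.mem_iInter, Set.mem_ofPred_eq]
  refine ⟨fun hz => ⟨hz.1, fun y hy => ⟨hz.1, le_zero_of_mem_equilibriumSet hA2 hz hy⟩⟩,
    fun hz => mem_equilibriumSet_of_forall_le_zero hEco hA1 hA3 hA4c hz.1 fun y hy => (hz.2 y hy).2⟩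

theorem convex_equilibriumSet (hEco : Convex ℝ E)
    (hA1 : ∀ x ∈ E, f x x = 0) (hA2 : ∀ x ∈ E, ∀ y ∈ E, f x y + f y x ≤ 0)
    (hA3 : ∀ x ∈ E, ∀ y ∈ E, ∀ z ∈ E,
      limsup (fun t : ℝ => f (t • z + (1 - t) • x) y) (𝓝[>] 0) ≤ f x y)
    (hA4c : ∀ x ∈ E, ConvexOn ℝ E (f x)) :
    Convex ℝ (equilibriumSet E f) := by
  rw [equilibriumSet_eq_biInter hEco hA1 hA2 hA3 hA4c]
  exact hEco.inter <| convex_iInter₂ fun y hy => (hA4c y hy).convex_le 0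

variable [TopologicalSpace V]

theorem isClosed_equilibriumSet (hEco : Convex ℝ E) (hEcl : IsClosed E)
    (hA1 : ∀ x ∈ E, f x x = 0) (hA2 : ∀ x ∈ E, ∀ y ∈ E, f x y + f y x ≤ 0)
    (hA3 : ∀ x ∈ E, ∀ y ∈ E, ∀ z ∈ E,
      limsup (fun t : ℝ => f (t • z + (1 - t) • x) y) (𝓝[>] 0) ≤ f x y)
    (hA4c : ∀ x ∈ E, ConvexOn ℝ E (f x)) (hA4l : ∀ x ∈ E, LowerSemicontinuousOn (f x) E) :
    IsClosed (equilibriumSet E f) := by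
  rw [equilibriumSet_eq_biInter hEco hA1 hA2 hA3 hA4c]
  exact hEcl.inter <| isClosed_biInter fun y hy =>
    ((lowerSemicontinuousOn_iff_isClosed_epigraph hEcl).mp (hA4l y hy)).preimage
      (continuous_id.prodMk continuous_const)

end Equilibrium

section GeneralizedHybrid

variable {H : Type*} [NormedAddCommGroup H] {S : H → H}

def IsGeneralizedHybrid (α β : ℝ) (S : H → H) : Prop :=
  ∀ x y : H, α * ‖S x - S y‖ ^ 2 + (1 - α) * ‖x - S y‖ ^ 2 ≤
    β * ‖S x - y‖ ^ 2 + (1 - β) * ‖x - y‖ ^ 2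

theorem IsGeneralizedHybrid.norm_sub_le_of_isFixedPt {α β : ℝ} (hS : IsGeneralizedHybrid α β S)
    {z : H} (hz : IsFixedPt S z) (y : H) : ‖S y - z‖ ≤ ‖y - z‖ := by
  have h := hS z y
  rw [hz.eq, norm_sub_rev z, norm_sub_rev z] at h
  exact le_of_pow_le_pow_left₀ two_ne_zero (norm_nonneg _) (by linarith)

theorem isClosed_fixedPoints_of_norm_sub_le
    (hS : ∀ z ∈ fixedPoints S, ∀ y, ‖S y - z‖ ≤ ‖y - z‖) : IsClosed (fixedPoints S) := by
  refine IsSeqClosed.isClosed fun z z₀ hz hlim => ?_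
  have h := le_of_tendsto_of_tendsto' (tendsto_const_nhds.sub hlim).norm
    (tendsto_const_nhds.sub hlim).norm fun n => hS _ (hz n) z₀
  rw [sub_self, norm_zero] at h
  exact sub_eq_zero.mp (norm_le_zero_iff.mp h)

variable [InnerProductSpace ℝ H]

theorem convex_fixedPoints_of_norm_sub_le
    (hS : ∀ z ∈ fixedPoints S, ∀ y, ‖S y - z‖ ≤ ‖y - z‖) : Convex ℝ (fixedPoints S) := by
  intro p hp q hq a b ha hb hab
  obtain rfl : a = 1 - b := by linarith
  set m := (1 - b) • p + b • q with hm_def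
  -- `‖(1 - b) • (y - p) + b • (y - q)‖²` is `‖S m - m‖²` at `y = S m` and `0` at `y = m`
  have hS_m := norm_smul_add_smul_sq hab (S m - p) (S m - q)
  have hm := norm_smul_add_smul_sq hab (m - p) (m - q)
  rw [sub_sub_sub_cancel_left] at hS_m hm
  rw [show (1 - b) • (S m - p) + b • (S m - q) = S m - m by rw [hm_def]; module] at hS_m
  rw [show (1 - b) • (m - p) + b • (m - q) = 0 by rw [hm_def]; module, norm_zero] at hm
  have h1 := pow_le_pow_left₀ (norm_nonneg _) (hS p hp m) 2
  have h2 := pow_le_pow_left₀ (norm_nonneg _) (hS q hq m) 2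
  have : ⟪S m - m, S m - m⟫ ≤ 0 := by rw [real_inner_self_eq_norm_sq]; nlinarith
  exact sub_eq_zero.mp (real_inner_self_nonpos.mp this)

/-- Demiclosedness of `I - S` at `0`. -/
theorem IsGeneralizedHybrid.isFixedPt_of_weakTendsto {α β : ℝ} (hS : IsGeneralizedHybrid α β S)
    {u : ℕ → H} {v : H} {M : ℝ} (hu : WeakTendsto u v) (hM : ∀ n, ‖u n‖ ≤ M)
    (hSu : Tendsto (fun n => ‖S (u n) - u n‖) atTop (𝓝 0)) : IsFixedPt S v := by
  have hdiff : ∀ c : H, Tendsto (fun n => ‖S (u n) - c‖ ^ 2 - ‖u n - c‖ ^ 2) atTop (𝓝 0) :=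
    fun c => tendsto_norm_sq_sub_norm_sq
      (fun n => (norm_sub_le _ _).trans (add_le_add_left (hM n) _))
      (by simpa only [sub_sub_sub_cancel_right] using hSu)
  have hlim : Tendsto (fun n => ‖u n - S v‖ ^ 2 - ‖u n - v‖ ^ 2) atTop (𝓝 (‖v - S v‖ ^ 2)) := by
    have key : ∀ n, ‖u n - S v‖ ^ 2 - ‖u n - v‖ ^ 2
        = 2 * (⟪u n, v - S v⟫ - ⟪v, v - S v⟫) + ‖v - S v‖ ^ 2 := by
      intro n
      have := norm_add_sq_real (u n - v) (v - S v)
      rw [sub_add_sub_cancel] at this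
      rw [← inner_sub_left]
      linarith
    simp only [key]
    simpa using (((hu (v - S v)).sub_const ⟪v, v - S v⟫).const_mul 2).add_const (‖v - S v‖ ^ 2)
  have : ⟪v - S v, v - S v⟫ ≤ 0 := by
    rw [real_inner_self_eq_norm_sq]
    refine le_of_tendsto_of_tendsto' hlim
      (by simpa using ((hdiff (S v)).const_mul (-α)).add ((hdiff v).const_mul β)) fun n => ?_
    linarith [hS (u n) v]
  exact (sub_eq_zero.mp (real_inner_self_nonpos.mp this)).symm

end GeneralizedHybrid

section Fejer

variable {H : Type*} [NormedAddCommGroup H]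

def IsFejerMonotone (x : ℕ → H) (K : Set H) : Prop :=
  ∀ z ∈ K, Antitone fun n => ‖x n - z‖

namespace IsFejerMonotone

variable {x : ℕ → H} {K : Set H}

theorem norm_le (hx : IsFejerMonotone x K) {z : H} (hz : z ∈ K) (n : ℕ) :
    ‖x n‖ ≤ ‖x 0 - z‖ + ‖z‖ :=
  (norm_le_norm_sub_add _ z).trans (add_le_add_left (hx z hz n.zero_le) _)

theorem tendsto_norm_sub_sq (hx : IsFejerMonotone x K) {z : H} (hz : z ∈ K) :
    ∃ L, Tendsto (fun n => ‖x n - z‖ ^ 2) atTop (𝓝 L) :=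
  ⟨_, (tendsto_atTop_ciInf (hx z hz) ⟨0, by rintro _ ⟨n, rfl⟩; exact norm_nonneg _⟩).pow 2⟩

variable [InnerProductSpace ℝ H]

/-- Opial's argument: `2⟪x n, v - v'⟫` converges, since it differs from
`‖x n - v'‖² - ‖x n - v‖²` by a constant. -/
theorem eq_of_weakTendsto (hx : IsFejerMonotone x K) {v v' : H} (hv : v ∈ K) (hv' : v' ∈ K)
    {φ ψ : ℕ → ℕ} (hφ : Tendsto φ atTop atTop) (hψ : Tendsto ψ atTop atTop)
    (hxφ : WeakTendsto (x ∘ φ) v) (hxψ : WeakTendsto (x ∘ ψ) v') : v = v' := by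
  obtain ⟨L, hL⟩ := hx.tendsto_norm_sub_sq hv
  obtain ⟨L', hL'⟩ := hx.tendsto_norm_sub_sq hv'
  have key : ∀ n, 2 * ⟪x n, v - v'⟫ = ‖x n - v'‖ ^ 2 - ‖x n - v‖ ^ 2 + ‖v‖ ^ 2 - ‖v'‖ ^ 2 := by
    intro n
    rw [norm_sub_sq_real, norm_sub_sq_real, inner_sub_right]
    ring
  have hconv : Tendsto (fun n => 2 * ⟪x n, v - v'⟫) atTop
      (𝓝 (L' - L + ‖v‖ ^ 2 - ‖v'‖ ^ 2)) := by
    simp only [key]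
    exact ((hL'.sub hL).add_const _).sub_const _
  have e := (tendsto_nhds_unique (hconv.comp hφ) ((hxφ (v - v')).const_mul 2)).symm.trans
    (tendsto_nhds_unique (hconv.comp hψ) ((hxψ (v - v')).const_mul 2))
  rw [← sub_eq_zero, ← mul_sub, ← inner_sub_left, mul_eq_zero, inner_self_eq_zero] at e
  exact sub_eq_zero.mp (e.resolve_left two_ne_zero)

theorem exists_weakTendsto [CompleteSpace H] (hx : IsFejerMonotone x K) {z : H} (hz : z ∈ K)
    (hcl : ∀ φ : ℕ → ℕ, Tendsto φ atTop atTop → ∀ v, WeakTendsto (x ∘ φ) v → v ∈ K) :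
    ∃ v ∈ K, WeakTendsto x v := by
  obtain ⟨φ, hφ, v, hv⟩ := exists_weakTendsto_subseq (hx.norm_le hz)
  have hvK := hcl φ hφ.tendsto_atTop v hv
  refine ⟨v, hvK, fun w => tendsto_of_subseq_tendsto fun ns hns => ?_⟩
  obtain ⟨ms, hms, v', hv'⟩ := exists_weakTendsto_subseq fun n => hx.norm_le hz (ns n)
  have hnsms : Tendsto (ns ∘ ms) atTop atTop := hns.comp hms.tendsto_atTop
  obtain rfl := hx.eq_of_weakTendsto (hcl _ hnsms v' hv') hvK hnsms hφ.tendsto_atTop hv' hv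
  exact ⟨ms, hv' w⟩

/-- `hp` characterises `p n` as the projection of `x n` onto `K`; the estimate
`‖p m - p n‖² ≤ ‖x n - p n‖² - ‖x m - p m‖²` for `n ≤ m` makes `p` Cauchy. -/
theorem tendsto_proj [CompleteSpace H] (hx : IsFejerMonotone x K)
    {p : ℕ → H} (hpK : ∀ n, p n ∈ K) (hp : ∀ n, ∀ w ∈ K, ⟪x n - p n, w - p n⟫ ≤ 0)
    {v : H} (hv : v ∈ K) (hxv : WeakTendsto x v) : Tendsto p atTop (𝓝 v) := by
  have hkey : ∀ n m, n ≤ m → ‖p m - p n‖ ^ 2 ≤ ‖x n - p n‖ ^ 2 - ‖x m - p m‖ ^ 2 := by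
    intro n m hnm
    have h1 := pow_le_pow_left₀ (norm_nonneg _) (hx _ (hpK n) hnm) 2
    have h2 := norm_sub_sq_real (x m - p m) (p n - p m)
    rw [sub_sub_sub_cancel_right, norm_sub_rev (p n)] at h2
    linarith [hp m (p n) (hpK n)]
  have hanti : Antitone fun n => ‖x n - p n‖ ^ 2 := antitone_nat_of_succ_le fun n => by
    linarith [hkey n (n + 1) n.le_succ, sq_nonneg ‖p (n + 1) - p n‖]
  obtain ⟨q, hq⟩ := cauchySeq_tendsto_of_complete <| cauchySeq_of_dist_sq_le (p := p)
    (tendsto_atTop_ciInf hanti ⟨0, by rintro _ ⟨n, rfl⟩; positivity⟩)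
    fun n m hnm => by rw [dist_eq_norm]; exact hkey n m hnm
  have hvq : Tendsto (fun n => v - p n) atTop (𝓝 (v - q)) := tendsto_const_nhds.sub hq
  have hlim : Tendsto (fun n => ⟪x n - p n, v - p n⟫) atTop (𝓝 ⟪v - q, v - q⟫) := by
    simpa only [inner_sub_left] using
      (hxv.tendsto_inner_of_tendsto (hx.norm_le hv) hvq).sub (hq.inner hvq)
  have := le_of_tendsto' hlim fun n => hp n v hv
  rwa [sub_eq_zero.mp (real_inner_self_nonpos.mp this)]

end IsFejerMonotone

end Fejer

section StepInequality

variable {H : Type*} [NormedAddCommGroup H] {x u y : ℕ → H} {K : Set H} {βs : ℕ → ℝ}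

theorem isFejerMonotone_of_step (hβ : ∀ n, 0 ≤ βs n ∧ βs n ≤ 1)
    (hstep : ∀ z ∈ K, ∀ n, ‖x (n + 1) - z‖ ^ 2 + βs n * ‖x n - u n‖ ^ 2
      + βs n * (1 - βs n) * ‖x n - y n‖ ^ 2 ≤ ‖x n - z‖ ^ 2) :
    IsFejerMonotone x K := fun z hz => antitone_nat_of_succ_le fun n => by
  have := mul_nonneg (hβ n).1 (sub_nonneg.2 (hβ n).2)
  refine le_of_pow_le_pow_left₀ two_ne_zero (norm_nonneg _) ?_
  nlinarith [hstep z hz n, (hβ n).1]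

theorem tendsto_norm_sub_of_step {b : ℝ} (hb : 0 < b) (hβ : ∀ n, b ≤ βs n ∧ βs n ≤ 1)
    (hβinf : 0 < liminf (fun n => βs n * (1 - βs n)) atTop) {z : H} (hz : z ∈ K)
    (hstep : ∀ z ∈ K, ∀ n, ‖x (n + 1) - z‖ ^ 2 + βs n * ‖x n - u n‖ ^ 2
      + βs n * (1 - βs n) * ‖x n - y n‖ ^ 2 ≤ ‖x n - z‖ ^ 2) :
    Tendsto (fun n => ‖x n - u n‖) atTop (𝓝 0) ∧ Tendsto (fun n => ‖y n - u n‖) atTop (𝓝 0) := by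
  have hβ01 : ∀ n, 0 ≤ βs n ∧ βs n ≤ 1 := fun n => ⟨hb.le.trans (hβ n).1, (hβ n).2⟩
  have hprod : ∀ n, 0 ≤ βs n * (1 - βs n) := fun n => mul_nonneg (hβ01 n).1 (sub_nonneg.2 (hβ n).2)
  obtain ⟨L, hL⟩ := (isFejerMonotone_of_step hβ01 hstep).tendsto_norm_sub_sq hz
  have hβc : ∀ᶠ n in atTop, liminf (fun n => βs n * (1 - βs n)) atTop / 2 < βs n * (1 - βs n) :=
    eventually_lt_of_lt_liminf (half_lt_self hβinf) (isBoundedUnder_of ⟨0, hprod⟩)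
  have hxu : Tendsto (fun n => ‖x n - u n‖) atTop (𝓝 0) := by
    refine tendsto_zero_of_sq_le_sub_succ hL hb (fun _ => norm_nonneg _) ?_
    refine Eventually.of_forall fun n => ?_
    nlinarith [hstep z hz n, mul_le_mul_of_nonneg_right (hβ n).1 (sq_nonneg ‖x n - u n‖),
      mul_nonneg (hprod n) (sq_nonneg ‖x n - y n‖)]
  have hxy : Tendsto (fun n => ‖x n - y n‖) atTop (𝓝 0) := by
    refine tendsto_zero_of_sq_le_sub_succ hL (half_pos hβinf) (fun _ => norm_nonneg _) ?_
    refine hβc.mono fun n hn => ?_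
    nlinarith [hstep z hz n, mul_le_mul_of_nonneg_right hn.le (sq_nonneg ‖x n - y n‖),
      mul_nonneg (hβ01 n).1 (sq_nonneg ‖x n - u n‖)]
  refine ⟨hxu, squeeze_zero (fun _ => norm_nonneg _) (fun n => ?_) (by simpa using hxy.add hxu)⟩
  exact (norm_sub_le_norm_sub_add_norm_sub _ (x n) _).trans_eq (by rw [norm_sub_rev])

end StepInequality

section Iteration

variable {H : Type*} [NormedAddCommGroup H] [InnerProductSpace ℝ H] {E : Set H} {f : H → H → ℝ}

theorem norm_sub_sq_add_le_of_resolvent (hA2 : ∀ x ∈ E, ∀ y ∈ E, f x y + f y x ≤ 0) {r : ℝ}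
    (hr : 0 < r) {x u z : H} (hu : u ∈ E)
    (hueq : ∀ w ∈ E, 0 ≤ f u w + (1 / r) * ⟪w - u, u - x⟫) (hz : z ∈ equilibriumSet E f) :
    ‖u - z‖ ^ 2 + ‖x - u‖ ^ 2 ≤ ‖x - z‖ ^ 2 := by
  have hinner : 0 ≤ ⟪z - u, u - x⟫ := by
    refine nonneg_of_mul_nonneg_right (a := 1 / r) ?_ (by positivity)
    linarith [hueq z hz.1, le_zero_of_mem_equilibriumSet hA2 hz hu]
  have hsplit := norm_add_sq_real (x - u) (u - z)
  rw [sub_add_sub_cancel, ← inner_neg_neg, neg_sub, neg_sub, real_inner_comm] at hsplit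
  linarith

theorem norm_step_sub_sq_add_le {S : H → H} {z : H} (hS : ∀ y, ‖S y - z‖ ≤ ‖y - z‖) {x u : H}
    {t : ℝ} (ht : 0 ≤ t) (hu : ‖u - z‖ ^ 2 + ‖x - u‖ ^ 2 ≤ ‖x - z‖ ^ 2) :
    ‖S ((1 - t) • x + t • S u) - z‖ ^ 2 + t * ‖x - u‖ ^ 2 + t * (1 - t) * ‖x - S u‖ ^ 2
      ≤ ‖x - z‖ ^ 2 := by
  have hmid := norm_smul_add_smul_sq (sub_add_cancel 1 t) (x - z) (S u - z)
  rw [sub_sub_sub_cancel_right,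
    show (1 - t) • (x - z) + t • (S u - z) = (1 - t) • x + t • S u - z by module] at hmid
  have h1 := pow_le_pow_left₀ (norm_nonneg _) (hS ((1 - t) • x + t • S u)) 2
  have h2 := pow_le_pow_left₀ (norm_nonneg _) (hS u) 2
  nlinarith [mul_le_mul_of_nonneg_left h2 ht]

variable [CompleteSpace H]

theorem mem_equilibriumSet_of_weakTendsto (hEco : Convex ℝ E) (hEcl : IsClosed E)
    (hA1 : ∀ x ∈ E, f x x = 0) (hA2 : ∀ x ∈ E, ∀ y ∈ E, f x y + f y x ≤ 0)
    (hA3 : ∀ x ∈ E, ∀ y ∈ E, ∀ z ∈ E,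
      limsup (fun t : ℝ => f (t • z + (1 - t) • x) y) (𝓝[>] 0) ≤ f x y)
    (hA4c : ∀ x ∈ E, ConvexOn ℝ E (f x)) (hA4l : ∀ x ∈ E, LowerSemicontinuousOn (f x) E)
    {r : ℕ → ℝ} {ρ : ℝ} (hρ : 0 < ρ) (hr : ∀ᶠ n in atTop, ρ < r n) {x u : ℕ → H} {v : H}
    {M : ℝ} (hu : ∀ n, u n ∈ E)
    (hueq : ∀ n, ∀ w ∈ E, 0 ≤ f (u n) w + (1 / r n) * ⟪w - u n, u n - x n⟫)
    (hM : ∀ n, ‖u n‖ ≤ M) (hxu : Tendsto (fun n => ‖x n - u n‖) atTop (𝓝 0))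
    (huv : WeakTendsto u v) : v ∈ equilibriumSet E f := by
  have hvE : v ∈ E := hEco.mem_of_weakTendsto hEcl huv hu
  refine mem_equilibriumSet_of_forall_le_zero hEco hA1 hA3 hA4c hvE fun y hy => ?_
  refine (hA4c y hy).le_of_weakTendsto (hA4l y hy) hEcl huv hu
    (t := fun n => ⟪y - u n, u n - x n⟫ * (1 / r n)) ?_
    fun n => by linarith [hueq n y hy, hA2 (u n) (hu n) y hy]
  have hinner : Tendsto (fun n => ⟪y - u n, u n - x n⟫) atTop (𝓝 0) :=
    tendsto_inner_zero_of_norm_le (fun n => (norm_sub_le _ _).trans (add_le_add_right (hM n) _))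
      (by simpa only [norm_sub_rev] using hxu)
  refine hinner.zero_mul_isBoundedUnder_le ⟨1 / ρ, eventually_map.mpr (hr.mono fun n hn => ?_)⟩
  rw [comp_apply, Real.norm_of_nonneg (by have := hρ.trans hn; positivity)]
  exact one_div_le_one_div_of_le hρ hn.le

end Iteration

theorem stmt_2_general
    {H : Type*} [NormedAddCommGroup H] [InnerProductSpace ℝ H] [CompleteSpace H]
    (E : Set H) (hEcl : IsClosed E) (hEco : Convex ℝ E)
    (f : H → H → ℝ)
    (hA1 : ∀ x ∈ E, f x x = 0)
    (hA2 : ∀ x ∈ E, ∀ y ∈ E, f x y + f y x ≤ 0)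
    (hA3 : ∀ x ∈ E, ∀ y ∈ E, ∀ z ∈ E,
      Filter.limsup (fun t : ℝ => f (t • z + (1 - t) • x) y) (nhdsWithin 0 (Set.Ioi 0)) ≤ f x y)
    (hA4c : ∀ x ∈ E, ConvexOn ℝ E (f x))
    (hA4l : ∀ x ∈ E, LowerSemicontinuousOn (f x) E)
    (S : H → H) (α β : ℝ)
    (hS : ∀ x y : H,
      α * ‖S x - S y‖ ^ 2 + (1 - α) * ‖x - S y‖ ^ 2 ≤
        β * ‖S x - y‖ ^ 2 + (1 - β) * ‖x - y‖ ^ 2)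
    (K : Set H)
    (hK : K = {z : H | S z = z} ∩ {z ∈ E | ∀ w ∈ E, 0 ≤ f z w})
    (hKne : K.Nonempty)
    (r : ℕ → ℝ) (hr : ∀ n, 0 < r n) (hrinf : 0 < Filter.liminf r Filter.atTop)
    (b : ℝ) (hb : 0 < b)
    (βs : ℕ → ℝ) (hβs : ∀ n, b ≤ βs n ∧ βs n ≤ 1)
    (hβinf : 0 < Filter.liminf (fun n => βs n * (1 - βs n)) Filter.atTop)
    (x u : ℕ → H)
    (hu : ∀ n, u n ∈ E)
    (hueq : ∀ n, ∀ w ∈ E, 0 ≤ f (u n) w + (1 / r n) * ⟪w - u n, u n - x n⟫)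
    (hx : ∀ n, x (n + 1) = S ((1 - βs n) • x n + βs n • S (u n))) :
    ∃ v ∈ K,
      (∀ w : H, Filter.Tendsto (fun n => ⟪x n, w⟫) Filter.atTop (𝓝 ⟪v, w⟫)) ∧
      ∃ p : ℕ → H,
        (∀ n, p n ∈ K ∧ ∀ w ∈ K, ‖x n - p n‖ ≤ ‖x n - w‖) ∧
        Filter.Tendsto p Filter.atTop (𝓝 v) := by
  replace hS : IsGeneralizedHybrid α β S := hS
  replace hK : K = fixedPoints S ∩ equilibriumSet E f := hK
  have hquasi : ∀ z ∈ fixedPoints S, ∀ y, ‖S y - z‖ ≤ ‖y - z‖ :=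
    fun z hz => hS.norm_sub_le_of_isFixedPt hz
  have hKcl : IsClosed K := hK ▸ (isClosed_fixedPoints_of_norm_sub_le hquasi).inter
    (isClosed_equilibriumSet hEco hEcl hA1 hA2 hA3 hA4c hA4l)
  have hKco : Convex ℝ K := hK ▸ (convex_fixedPoints_of_norm_sub_le hquasi).inter
    (convex_equilibriumSet hEco hA1 hA2 hA3 hA4c)
  have hresolvent : ∀ z ∈ K, ∀ n, ‖u n - z‖ ^ 2 + ‖x n - u n‖ ^ 2 ≤ ‖x n - z‖ ^ 2 := fun z hz n =>
    norm_sub_sq_add_le_of_resolvent hA2 (hr n) (hu n) (hueq n) (hK ▸ hz).2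
  have hstep : ∀ z ∈ K, ∀ n, ‖x (n + 1) - z‖ ^ 2 + βs n * ‖x n - u n‖ ^ 2
      + βs n * (1 - βs n) * ‖x n - S (u n)‖ ^ 2 ≤ ‖x n - z‖ ^ 2 := fun z hz n =>
    hx n ▸ norm_step_sub_sq_add_le (hquasi z (hK ▸ hz).1) (hb.le.trans (hβs n).1)
      (hresolvent z hz n)
  have hfejer := isFejerMonotone_of_step (fun n => ⟨hb.le.trans (hβs n).1, (hβs n).2⟩) hstep
  obtain ⟨p₀, hp₀⟩ := hKne
  obtain ⟨hxu, hSu⟩ := tendsto_norm_sub_of_step hb hβs hβinf hp₀ hstep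
  have hubd : ∀ n, ‖u n‖ ≤ ‖x 0 - p₀‖ + ‖p₀‖ := fun n => by
    have := le_of_pow_le_pow_left₀ two_ne_zero (norm_nonneg _)
      ((le_add_of_nonneg_right (sq_nonneg _)).trans (hresolvent p₀ hp₀ n))
    exact (norm_le_norm_sub_add _ p₀).trans
      (add_le_add_left (this.trans (hfejer p₀ hp₀ n.zero_le)) _)
  have hρ : ∀ᶠ n in atTop, liminf r atTop / 2 < r n :=
    eventually_lt_of_lt_liminf (half_lt_self hrinf) (isBoundedUnder_of ⟨0, fun n => (hr n).le⟩)
  have hcl : ∀ φ : ℕ → ℕ, Tendsto φ atTop atTop → ∀ v, WeakTendsto (x ∘ φ) v → v ∈ K := by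
    intro φ hφ v hv
    have huv : WeakTendsto (u ∘ φ) v := hv.congr_of_norm_sub (hxu.comp hφ)
    exact hK ▸ ⟨hS.isFixedPt_of_weakTendsto huv (fun n => hubd _) (hSu.comp hφ),
      mem_equilibriumSet_of_weakTendsto hEco hEcl hA1 hA2 hA3 hA4c hA4l (half_pos hrinf)
        (hφ.eventually hρ) (fun n => hu _) (fun n => hueq _) (fun n => hubd _) (hxu.comp hφ) huv⟩
  obtain ⟨v, hvK, hxv⟩ := hfejer.exists_weakTendsto hp₀ hcl
  choose p hpK hpmin hpvi using fun n => exists_nearest_point ⟨p₀, hp₀⟩ hKcl hKco (x n)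
  exact ⟨v, hvK, hxv, p, fun n => ⟨hpK n, hpmin n⟩, hfejer.tendsto_proj hpK hpvi hvK hxv⟩

/-- Corollary: weak convergence of the iteration x_{n+1} = S((1-β_n)x_n + β_n S u_n)
for an equilibrium problem and an (α, β)-generalized hybrid mapping. -/
theorem stmt_2
    {H : Type*} [NormedAddCommGroup H] [InnerProductSpace ℝ H] [CompleteSpace H]
    (E : Set H) (hEne : E.Nonempty) (hEcl : IsClosed E) (hEco : Convex ℝ E)
    (f : H → H → ℝ)
    (hA1 : ∀ x ∈ E, f x x = 0)
    (hA2 : ∀ x ∈ E, ∀ y ∈ E, f x y + f y x ≤ 0)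
    (hA3 : ∀ x ∈ E, ∀ y ∈ E, ∀ z ∈ E,
      Filter.limsup (fun t : ℝ => f (t • z + (1 - t) • x) y) (nhdsWithin 0 (Set.Ioi 0)) ≤ f x y)
    (hA4c : ∀ x ∈ E, ConvexOn ℝ E (f x))
    (hA4l : ∀ x ∈ E, LowerSemicontinuousOn (f x) E)
    (S : H → H) (α β : ℝ)
    (hS : ∀ x y : H,
      α * ‖S x - S y‖ ^ 2 + (1 - α) * ‖x - S y‖ ^ 2 ≤
        β * ‖S x - y‖ ^ 2 + (1 - β) * ‖x - y‖ ^ 2)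
    (K : Set H)
    (hK : K = {z : H | S z = z} ∩ {z ∈ E | ∀ w ∈ E, 0 ≤ f z w})
    (hKne : K.Nonempty)
    (r : ℕ → ℝ) (hr : ∀ n, 0 < r n) (hrinf : 0 < Filter.liminf r Filter.atTop)
    (b : ℝ) (hb : 0 < b) (hb1 : b < 1)
    (βs : ℕ → ℝ) (hβs : ∀ n, b ≤ βs n ∧ βs n ≤ 1)
    (hβinf : 0 < Filter.liminf (fun n => βs n * (1 - βs n)) Filter.atTop)
    (x u : ℕ → H)
    (hu : ∀ n, u n ∈ E)
    (hueq : ∀ n, ∀ w ∈ E, 0 ≤ f (u n) w + (1 / r n) * ⟪w - u n, u n - x n⟫)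
    (hx : ∀ n, x (n + 1) = S ((1 - βs n) • x n + βs n • S (u n))) :
    ∃ v ∈ K,
      (∀ w : H, Filter.Tendsto (fun n => ⟪x n, w⟫) Filter.atTop (𝓝 ⟪v, w⟫)) ∧
      ∃ p : ℕ → H,
        (∀ n, p n ∈ K ∧ ∀ w ∈ K, ‖x n - p n‖ ≤ ‖x n - w‖) ∧
        Filter.Tendsto p Filter.atTop (𝓝 v) :=
  stmt_2_general E hEcl hEco f hA1 hA2 hA3 hA4c hA4l S α β hS K hK hKne r hr hrinf b hb βs hβs hβinf
    x u hu hueq hx
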